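/- Let X be a square-integrable non-degenerate real random variable. Then the map τ ↦ μ_τ(X) from (0,1) to ℝ is strictly increasing, where μ_τ(X) denotes the τ-expectile of X. -/

import Mathlib

open MeasureTheory

noncomputable def Rloss (τ u : ℝ) : ℝ :=
  τ * (max u 0) ^ 2 + (1 - τ) * (max (-u) 0) ^ 2

def IsExpectile {Ω : Type*} [MeasurableSpace Ω] (μ : Measure Ω) (τ : ℝ)
    (X : Ω → ℝ) (m : ℝ) : Prop :=
  ∀ m' : ℝ, ∫ ω, Rloss τ (X ω - m) ∂μ ≤ ∫ ω, Rloss τ (X ω - m') ∂μ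

/-!
A minimiser `m` of the asymmetric quadratic loss satisfies the first-order condition
`τ E[(X - m)₊] = (1 - τ) E[(X - m)₋]`. The left side decreases and the right side increases in `m`,
and moving `τ` up by `δ` changes their difference by `δ E|X - m|`, which is positive for
non-degenerate `X`. Hence a larger `τ` forces a strictly larger solution `m`.
-/

lemma continuous_Rloss (τ : ℝ) : Continuous (Rloss τ) := by
  unfold Rloss
  fun_prop

lemma Rloss_nonneg {τ : ℝ} (hτ₀ : 0 ≤ τ) (hτ₁ : τ ≤ 1) (u : ℝ) : 0 ≤ Rloss τ u := by
  have : 0 ≤ 1 - τ := by linarith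
  unfold Rloss
  positivity

lemma Rloss_le_sq {τ : ℝ} (hτ₀ : 0 ≤ τ) (hτ₁ : τ ≤ 1) (u : ℝ) : Rloss τ u ≤ u ^ 2 := by
  unfold Rloss
  rcases le_total u 0 with hu | hu
  · rw [max_eq_right hu, max_eq_left (neg_nonneg.2 hu)]
    nlinarith
  · rw [max_eq_left hu, max_eq_right (neg_nonpos.2 hu)]
    nlinarith

/-- `Rloss τ` is `C¹` with derivative `2 (τ u₊ - (1 - τ) u₋)`, and this derivative is
`1`-Lipschitz. -/
lemma Rloss_add_le {τ : ℝ} (hτ₀ : 0 ≤ τ) (hτ₁ : τ ≤ 1) (u h : ℝ) :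
    Rloss τ (u + h) ≤ Rloss τ u + 2 * h * (τ * max u 0 - (1 - τ) * max (-u) 0) + h ^ 2 := by
  unfold Rloss
  rcases le_total u 0 with hu | hu <;> rcases le_total (u + h) 0 with huh | huh
  · rw [max_eq_right hu, max_eq_left (neg_nonneg.2 hu), max_eq_right huh,
      max_eq_left (neg_nonneg.2 huh)]
    nlinarith
  · rw [max_eq_right hu, max_eq_left (neg_nonneg.2 hu), max_eq_left huh,
      max_eq_right (neg_nonpos.2 huh)]
    nlinarith [mul_nonneg hτ₀ (mul_nonneg (neg_nonneg.2 hu) (by linarith : 0 ≤ 2 * h + u)),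
      mul_nonneg (by linarith : 0 ≤ 1 - τ) (sq_nonneg (u + h))]
  · rw [max_eq_left hu, max_eq_right (neg_nonpos.2 hu), max_eq_right huh,
      max_eq_left (neg_nonneg.2 huh)]
    nlinarith [mul_nonneg (by linarith : 0 ≤ 1 - τ) (mul_nonneg hu (by linarith : 0 ≤ -2 * h - u)),
      mul_nonneg hτ₀ (sq_nonneg (u + h))]
  · rw [max_eq_left hu, max_eq_right (neg_nonpos.2 hu), max_eq_left huh,
      max_eq_right (neg_nonpos.2 huh)]
    nlinarith

section Integrals

variable {Ω : Type*} [MeasurableSpace Ω] {μ : Measure Ω} {X : Ω → ℝ}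

lemma integrable_Rloss_sub [IsFiniteMeasure μ] (hX : MemLp X 2 μ) {τ : ℝ} (hτ₀ : 0 ≤ τ)
    (hτ₁ : τ ≤ 1) (m : ℝ) :
    Integrable (fun ω => Rloss τ (X ω - m)) μ := by
  refine (hX.sub (memLp_const m)).integrable_sq.mono'
    ((continuous_Rloss τ).comp_aestronglyMeasurable (hX.1.sub aestronglyMeasurable_const))
    (ae_of_all _ fun ω => ?_)
  rw [Real.norm_of_nonneg (Rloss_nonneg hτ₀ hτ₁ _)]
  exact Rloss_le_sq hτ₀ hτ₁ _

lemma integrable_max_sub_const [IsFiniteMeasure μ] (hX : Integrable X μ) (m : ℝ) :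
    Integrable (fun ω => max (X ω - m) 0) μ :=
  (hX.sub (integrable_const m)).pos_part

lemma integrable_max_const_sub [IsFiniteMeasure μ] (hX : Integrable X μ) (m : ℝ) :
    Integrable (fun ω => max (m - X ω) 0) μ :=
  ((integrable_const m).sub hX).pos_part

lemma antitone_integral_max_sub_const [IsFiniteMeasure μ] (hX : Integrable X μ) :
    Antitone fun m => ∫ ω, max (X ω - m) 0 ∂μ := fun a b hab =>
  integral_mono (integrable_max_sub_const hX b) (integrable_max_sub_const hX a) fun _ =>
    max_le_max (by linarith) le_rfl

lemma monotone_integral_max_const_sub [IsFiniteMeasure μ] (hX : Integrable X μ) :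
    Monotone fun m => ∫ ω, max (m - X ω) 0 ∂μ := fun a b hab =>
  integral_mono (integrable_max_const_sub hX a) (integrable_max_const_sub hX b) fun _ =>
    max_le_max (by linarith) le_rfl

lemma integral_max_sub_const_add_integral_max_const_sub_pos [IsFiniteMeasure μ]
    (hX : Integrable X μ) {m : ℝ} (hnd : ¬ X =ᵐ[μ] fun _ => m) :
    0 < ∫ ω, max (X ω - m) 0 ∂μ + ∫ ω, max (m - X ω) 0 ∂μ := by
  have habs : ∀ ω, max (X ω - m) 0 + max (m - X ω) 0 = |X ω - m| := fun ω => by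
    rw [← max_zero_add_max_neg_zero_eq_abs_self, neg_sub]
  rw [← integral_add (integrable_max_sub_const hX m) (integrable_max_const_sub hX m)]
  simp only [habs]
  refine lt_of_le_of_ne (integral_nonneg fun _ => abs_nonneg _) fun h => hnd ?_
  have hzero := (integral_eq_zero_iff_of_nonneg (fun _ => abs_nonneg _)
    (hX.sub (integrable_const m)).abs).1 h.symm
  filter_upwards [hzero] with ω hω
  exact sub_eq_zero.1 (abs_eq_zero.1 hω)

theorem IsExpectile.mul_integral_max_sub_const_eq [IsProbabilityMeasure μ] (hX : MemLp X 2 μ)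
    {τ m : ℝ} (hτ₀ : 0 ≤ τ) (hτ₁ : τ ≤ 1) (hm : IsExpectile μ τ X m) :
    τ * ∫ ω, max (X ω - m) 0 ∂μ = (1 - τ) * ∫ ω, max (m - X ω) 0 ∂μ := by
  have hX₁ : Integrable X μ := hX.integrable one_le_two
  have hP := integrable_max_sub_const hX₁ m
  have hN := integrable_max_const_sub hX₁ m
  have hR := integrable_Rloss_sub hX hτ₀ hτ₁ m
  have hψ : Integrable (fun ω => τ * max (X ω - m) 0 - (1 - τ) * max (m - X ω) 0) μ :=
    (hP.const_mul τ).sub (hN.const_mul (1 - τ))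
  set c := τ * ∫ ω, max (X ω - m) 0 ∂μ - (1 - τ) * ∫ ω, max (m - X ω) 0 ∂μ
  have hψc : ∫ ω, (τ * max (X ω - m) 0 - (1 - τ) * max (m - X ω) 0) ∂μ = c := by
    rw [integral_sub (hP.const_mul τ) (hN.const_mul (1 - τ)), integral_const_mul,
      integral_const_mul]
  have hRψ : Integrable (fun ω => Rloss τ (X ω - m) +
      2 * (-c) * (τ * max (X ω - m) 0 - (1 - τ) * max (m - X ω) 0)) μ :=
    hR.add (hψ.const_mul _)
  -- moving from `m` to `m + c` would lower the expected loss by at least `c ^ 2`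
  have hdescent : ∫ ω, Rloss τ (X ω - (m + c)) ∂μ ≤ ∫ ω, Rloss τ (X ω - m) ∂μ - c ^ 2 :=
    calc ∫ ω, Rloss τ (X ω - (m + c)) ∂μ
        ≤ ∫ ω, (Rloss τ (X ω - m) +
            2 * (-c) * (τ * max (X ω - m) 0 - (1 - τ) * max (m - X ω) 0) + (-c) ^ 2) ∂μ := by
          refine integral_mono (integrable_Rloss_sub hX hτ₀ hτ₁ _)
            (hRψ.add (integrable_const _)) fun ω => ?_
          rw [show X ω - (m + c) = X ω - m + -c by ring, show m - X ω = -(X ω - m) by ring]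
          exact Rloss_add_le hτ₀ hτ₁ (X ω - m) (-c)
      _ = ∫ ω, Rloss τ (X ω - m) ∂μ + 2 * (-c) * c + (-c) ^ 2 := by
          rw [integral_add hRψ (integrable_const _), integral_add hR (hψ.const_mul _),
            integral_const_mul, hψc, integral_const]
          simp
      _ = ∫ ω, Rloss τ (X ω - m) ∂μ - c ^ 2 := by ring
  have hc : c = 0 := pow_eq_zero_iff two_ne_zero |>.1 <|
    le_antisymm (by linarith [hm (m + c)]) (sq_nonneg c)
  linarith

end Integrals

theorem stmt14 {Ω : Type*} [MeasurableSpace Ω] (μ : Measure Ω) [IsProbabilityMeasure μ]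
    (X : Ω → ℝ) (hX : Measurable X) (hX2 : Integrable (fun ω => (X ω) ^ 2) μ)
    (hnondeg : ∀ c : ℝ, ¬ (X =ᵐ[μ] fun _ => c))
    (e : ℝ → ℝ) (he : ∀ τ ∈ Set.Ioo (0:ℝ) 1, IsExpectile μ τ X (e τ)) :
    StrictMonoOn e (Set.Ioo 0 1) := by
  have hXL2 : MemLp X 2 μ := (memLp_two_iff_integrable_sq hX.aestronglyMeasurable).2 hX2
  have hX₁ : Integrable X μ := hXL2.integrable one_le_two
  intro τ₁ hτ₁ τ₂ hτ₂ hlt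
  by_contra! hle
  have foc₁ := (he τ₁ hτ₁).mul_integral_max_sub_const_eq hXL2 hτ₁.1.le hτ₁.2.le
  have foc₂ := (he τ₂ hτ₂).mul_integral_max_sub_const_eq hXL2 hτ₂.1.le hτ₂.2.le
  have hP := antitone_integral_max_sub_const hX₁ hle
  have hN := monotone_integral_max_const_sub hX₁ hle
  have hpos := integral_max_sub_const_add_integral_max_const_sub_pos hX₁ (hnondeg (e τ₁))
  simp only at hP hN
  nlinarith [mul_le_mul_of_nonneg_left hP hτ₂.1.le,
    mul_le_mul_of_nonneg_left hN (sub_nonneg.2 hτ₂.2.le), mul_pos (sub_pos.2 hlt) hpos]
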